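/- The exterior differential and the boundary operator are adjoint: for every (p-1)-form f and every p-form g on V, ⟨df, g⟩ = ⟨f, ∂g⟩. -/

import Mathlib

/-- The exterior differential: maps forms on paths of `n` vertices to forms on
paths of `n+1` vertices, `(df)(i₀⋯i_n) = Σ_q (−1)^q f(i₀⋯ î_q ⋯ i_n)`. -/
def dOp {V : Type*} {n : ℕ} (f : (Fin n → V) → ℝ) : (Fin (n + 1) → V) → ℝ :=
  fun x => ∑ q : Fin (n + 1), (-1 : ℝ) ^ (q : ℕ) * f (x ∘ q.succAbove)

/-- The boundary operator: maps forms on paths of `n+1` vertices to forms on paths of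
`n` vertices, `(∂f)(i₀⋯i_{n−1}) = Σ_{k∈V} Σ_q (−1)^q f(i₀⋯ i_{q−1} k i_q ⋯ i_{n−1})`;
it is taken to be `0` on 0-forms (forms on single vertices). -/
def bd {V : Type*} [Fintype V] : {n : ℕ} → ((Fin (n + 1) → V) → ℝ) → ((Fin n → V) → ℝ)
  | 0, _ => 0
  | (m + 1), f => fun y => ∑ k : V, ∑ q : Fin (m + 2), (-1 : ℝ) ^ (q : ℕ) * f (q.insertNth k y)

/-- The Laplacian `Δ = d∂ + ∂d` on forms on paths of `p+1` vertices (p-forms). -/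
def lap {V : Type*} [Fintype V] {p : ℕ} (f : (Fin (p + 1) → V) → ℝ) :
    (Fin (p + 1) → V) → ℝ :=
  dOp (bd f) + bd (dOp f)

/-- The inner product `⟨f,g⟩ = Σ_x f(x) g(x)` over all elementary paths. -/
def pinner {V : Type*} [Fintype V] {n : ℕ} (f g : (Fin n → V) → ℝ) : ℝ :=
  ∑ x : Fin n → V, f x * g x

/-! Since `Fin.insertNth q` identifies `V × (Fin n → V)` with `Fin (n + 1) → V`, deleting the
vertex in position `q` has as adjoint the sum over all ways of inserting a vertex in position `q`.
Both `d` and `∂` are the alternating sums over `q` of these two operations. -/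

theorem Fin.sum_comp_succAbove_eq_sum_insertNth {M V : Type*} [AddCommMonoid M] [Fintype V]
    {n : ℕ} (q : Fin (n + 1)) (F : (Fin n → V) → (Fin (n + 1) → V) → M) :
    ∑ x : Fin (n + 1) → V, F (x ∘ q.succAbove) x =
      ∑ k : V, ∑ y : Fin n → V, F y (q.insertNth k y) := by
  rw [← (Fin.insertNthEquiv (fun _ => V) q).sum_comp, Fintype.sum_prod_type]
  simp only [Fin.insertNthEquiv, Equiv.coe_fn_mk, Fin.insertNth_comp_succAbove]

theorem pinner_comp_succAbove {V : Type*} [Fintype V] {n : ℕ} (q : Fin (n + 1))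
    (f : (Fin n → V) → ℝ) (g : (Fin (n + 1) → V) → ℝ) :
    pinner (fun x => f (x ∘ q.succAbove)) g =
      pinner f (fun y => ∑ k : V, g (q.insertNth k y)) := by
  simp only [pinner, Finset.mul_sum]
  rw [Fin.sum_comp_succAbove_eq_sum_insertNth q (fun y x => f y * g x), Finset.sum_comm]

/-- `d` and `∂` are adjoint: `⟨df, g⟩ = ⟨f, ∂g⟩`. -/
theorem d_adjoint_bd {V : Type*} [Fintype V] (p : ℕ)
    (f : (Fin (p + 1) → V) → ℝ) (g : (Fin (p + 2) → V) → ℝ) :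
    pinner (dOp f) g = pinner f (bd g) := by
  calc pinner (dOp f) g
      = ∑ q : Fin (p + 2), (-1 : ℝ) ^ (q : ℕ) * pinner (fun x => f (x ∘ q.succAbove)) g := by
        simp only [pinner, dOp, Finset.sum_mul, Finset.mul_sum, mul_assoc]
        exact Finset.sum_comm
    _ = ∑ q : Fin (p + 2), (-1 : ℝ) ^ (q : ℕ) * pinner f (fun y => ∑ k : V, g (q.insertNth k y)) := by
        simp only [pinner_comp_succAbove]
    _ = pinner f (bd g) := by
        simp only [pinner, bd, Finset.mul_sum]
        rw [Finset.sum_comm]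
        refine Finset.sum_congr rfl fun y _ => ?_
        rw [Finset.sum_comm]
        exact Finset.sum_congr rfl fun k _ => Finset.sum_congr rfl fun q _ => by ring
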